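/- arXiv:2210.07161 — 9 statements merged into one kernel-verified Lean document; each statement's English description precedes it below -/
import Mathlib

section
/- The functionality axiom is valid when Atm₀ is finite: for every MCM Γ = (S,Φ) over a finite set Atm₀, every s ∈ S, f ∈ Φ, X ⊆ Atm₀ and x ∈ Val, if (Γ,s,f) satisfies the complete conjunction cn(X, Atm₀) (all atoms in X true, all atoms in Atm₀ \ X false) and t(x), then (Γ,s,f) ⊨ □I (cn(X, Atm₀) → t(x)). -/
/-- Formulas of the language L of PLC. -/
inductive Form (Atm Val : Type) : Type
  | atom : Atm → Form Atm Val
  | dec  : Val → Form Atm Val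
  | neg  : Form Atm Val → Form Atm Val
  | and  : Form Atm Val → Form Atm Val → Form Atm Val
  | boxI : Form Atm Val → Form Atm Val
  | boxF : Form Atm Val → Form Atm Val

variable {Atm Val : Type}

def Form.impl (φ ψ : Form Atm Val) : Form Atm Val := .neg (.and φ (.neg ψ))

/-- Satisfaction at a pointed MCM (Γ,s,f) with Γ = (S,Φ). -/
def Sat (S : Set (Set Atm)) (Φ : Set ((Set Atm) → Val)) :
    Set Atm → ((Set Atm) → Val) → Form Atm Val → Prop
  | s, _, .atom p => p ∈ s
  | s, f, .dec x => f s = x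
  | s, f, .neg φ => ¬ Sat S Φ s f φ
  | s, f, .and φ ψ => Sat S Φ s f φ ∧ Sat S Φ s f ψ
  | _, f, .boxI φ => ∀ s' ∈ S, Sat S Φ s' f φ
  | s, _, .boxF φ => ∀ f' ∈ Φ, Sat S Φ s f' φ

/-- A valid formula used as the unit of big conjunctions. -/
def Form.tru [Inhabited Val] : Form Atm Val :=
  .neg (.and (.dec default) (.neg (.dec default)))

/-- Conjunction of a list of formulas. -/
def bigAnd [Inhabited Val] (l : List (Form Atm Val)) : Form Atm Val :=
  l.foldr .and .tru

/-- cn(Y,X): atoms in Y positively, atoms in X \ Y negatively. -/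
noncomputable def cnOn [DecidableEq Atm] [Inhabited Val] (Y X : Finset Atm) : Form Atm Val :=
  bigAnd (X.val.toList.map (fun p => if p ∈ Y then Form.atom p else .neg (.atom p)))

/-- The ceteris paribus modality [X]φ as an abbreviation. -/
noncomputable def cpBox [DecidableEq Atm] [Inhabited Val] (X : Finset Atm) (φ : Form Atm Val) :
    Form Atm Val :=
  bigAnd (X.powerset.val.toList.map
    (fun Y => (cnOn Y X).impl (.boxI ((cnOn Y X).impl φ))))

/-- The dual ⟨X⟩φ. -/
noncomputable def cpDia [DecidableEq Atm] [Inhabited Val] (X : Finset Atm) (φ : Form Atm Val) :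
    Form Atm Val := .neg (cpBox X (.neg φ))

/-- A term: a consistent conjunction of literals. -/
structure Term (Atm : Type) where
  pos : Finset Atm
  negs : Finset Atm
  disj : Disjoint pos negs

def Term.atoms [DecidableEq Atm] (t : Term Atm) : Finset Atm := t.pos ∪ t.negs

/-- The formula expressed by a term. -/
noncomputable def Term.form [Inhabited Val] (t : Term Atm) : Form Atm Val :=
  .and (bigAnd (t.pos.val.toList.map Form.atom))
       (bigAnd (t.negs.val.toList.map (fun p => .neg (.atom p))))

/-- PImp(λ,x): λ is a prime implicant for the classification x. -/
noncomputable def PImp [DecidableEq Atm] [Inhabited Val] (t : Term Atm) (x : Val) : Form Atm Val :=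
  .boxI ((t.form).impl (.and (.dec x)
    (bigAnd (t.atoms.val.toList.map
      (fun p => cpDia (t.atoms.erase p) (.neg (.dec x)))))))

/-- AXp(λ,x): λ is an abductive explanation of the actual classification x. -/
noncomputable def AXp [DecidableEq Atm] [Inhabited Val] (t : Term Atm) (x : Val) : Form Atm Val :=
  .and t.form (PImp t x)

lemma sat_tru [Inhabited Val] (S : Set (Set Atm)) (Φ : Set ((Set Atm) → Val))
    (s : Set Atm) (f : (Set Atm) → Val) : Sat S Φ s f (Form.tru : Form Atm Val) := by
  simp [Form.tru, Sat]

lemma sat_bigAnd [Inhabited Val] (S : Set (Set Atm)) (Φ : Set ((Set Atm) → Val))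
    (s : Set Atm) (f : (Set Atm) → Val) (l : List (Form Atm Val)) :
    Sat S Φ s f (bigAnd l) ↔ ∀ φ ∈ l, Sat S Φ s f φ := by
  induction l with
  | nil => simpa [bigAnd] using sat_tru S Φ s f
  | cons a l ih => simp [bigAnd, Sat] at *; tauto

lemma sat_cnOn_univ [DecidableEq Atm] [Fintype Atm] [Inhabited Val]
    (S : Set (Set Atm)) (Φ : Set ((Set Atm) → Val))
    (s : Set Atm) (f : (Set Atm) → Val) (X : Finset Atm) :
    Sat S Φ s f (cnOn X Finset.univ : Form Atm Val) ↔ s = ↑X := by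
  rw [cnOn, sat_bigAnd]
  simp only [List.mem_map, Multiset.mem_toList, Finset.mem_val, Finset.mem_univ, true_and]
  constructor
  · intro h
    ext p
    have := h (if p ∈ X then Form.atom p else .neg (.atom p)) ⟨p, rfl⟩
    by_cases hp : p ∈ X <;> simp [hp, Sat] at this ⊢ <;> tauto
  · rintro rfl φ ⟨p, rfl⟩
    by_cases hp : p ∈ X <;> simp [hp, Sat]

/-- the functionality axiom (cn(X,Atm₀) ∧ t(x)) → □I(cn(X,Atm₀) → t(x))
is valid when Atm₀ is finite. Here cn(X,Atm₀) is `cnOn X Finset.univ`. -/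
theorem functionality_axiom_valid [DecidableEq Atm] [Fintype Atm] [Inhabited Val]
    (S : Set (Set Atm)) (Φ : Set ((Set Atm) → Val))
    (s : Set Atm) (f : (Set Atm) → Val) (hs : s ∈ S) (hf : f ∈ Φ)
    (X : Finset Atm) (x : Val)
    (hcn : Sat S Φ s f (cnOn X Finset.univ : Form Atm Val))
    (hdec : Sat S Φ s f (Form.dec x)) :
    Sat S Φ s f (.boxI ((cnOn X Finset.univ).impl (.dec x)) : Form Atm Val) := by
  intro s' hs' h
  obtain ⟨hcn', h⟩ := h
  apply h
  have h1 := (sat_cnOn_univ S Φ s f X).1 hcn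
  have h2 := (sat_cnOn_univ S Φ s' f X).1 hcn'
  simp only [Sat] at hdec ⊢
  rw [h2, ← h1, hdec]
end

section
/- A formula φ of the language L is satisfiable relative to the class of multi-classifier models if and only if it is satisfiable relative to the class of multi-decision models (Kripke models over two commuting equivalence relations satisfying constraints C1–C5). -/
variable {Atm Val : Type}

/-- A multi-decision model (MDM): Kripke model over two commuting equivalence
relations satisfying constraints C1–C5. -/
structure MDM (Atm Val : Type) where
  W : Type
  RI : W → W → Prop
  RF : W → W → Prop
  equivI : Equivalence RI
  equivF : Equivalence RF
  /-- Valuation for atomic propositions. -/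
  VA : W → Set Atm
  /-- Valuation for decision atoms. -/
  VD : W → Set Val
  /-- C1: the relations commute. -/
  C1 : ∀ w v, (∃ u, RI w u ∧ RF u v) ↔ (∃ u, RF w u ∧ RI u v)
  /-- C2: functionality. -/
  C2 : ∀ w v, VA w = VA v → RI w v → VD w = VD v
  /-- C3: ∼F-related worlds agree on atoms. -/
  C3 : ∀ w v, RF w v → VA w = VA v
  /-- C4: at most one decision atom per world. -/
  C4 : ∀ w, ∀ x y : Val, x ∈ VD w → y ∈ VD w → x = y
  /-- C5: at least one decision atom per world. -/
  C5 : ∀ w, ∃ x : Val, x ∈ VD w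

/-- Kripke satisfaction in an MDM. -/
def KSat (M : MDM Atm Val) : M.W → Form Atm Val → Prop
  | w, .atom p => p ∈ M.VA w
  | w, .dec x => x ∈ M.VD w
  | w, .neg φ => ¬ KSat M w φ
  | w, .and φ ψ => KSat M w φ ∧ KSat M w ψ
  | w, .boxI φ => ∀ v, M.RI w v → KSat M v φ
  | w, .boxF φ => ∀ v, M.RF w v → KSat M v φ

/-! ### Auxiliary material for the proof -/

/-- From an MCM build an MDM on pairs (state, function). -/
def toMDM (S : Set (Set Atm)) (Φ : Set ((Set Atm) → Val)) : MDM Atm Val where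
  W := {p : Set Atm × ((Set Atm) → Val) // p.1 ∈ S ∧ p.2 ∈ Φ}
  RI p q := p.val.2 = q.val.2
  RF p q := p.val.1 = q.val.1
  equivI := ⟨fun _ => rfl, Eq.symm, Eq.trans⟩
  equivF := ⟨fun _ => rfl, Eq.symm, Eq.trans⟩
  VA p := p.val.1
  VD p := {p.val.2 p.val.1}
  C1 p q :=
    ⟨fun _ => ⟨⟨(p.val.1, q.val.2), p.2.1, q.2.2⟩, rfl, rfl⟩,
     fun _ => ⟨⟨(q.val.1, p.val.2), q.2.1, p.2.2⟩, rfl, rfl⟩⟩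
  C2 p q hVA hRI := by
    show ({p.val.2 p.val.1} : Set Val) = {q.val.2 q.val.1}
    rw [show p.val.2 = q.val.2 from hRI, show p.val.1 = q.val.1 from hVA]
  C3 _ _ h := h
  C4 p x y hx hy := by
    simp only [Set.mem_singleton_iff] at hx hy; rw [hx, hy]
  C5 p := ⟨p.val.2 p.val.1, rfl⟩

lemma toMDM_truth (S : Set (Set Atm)) (Φ : Set ((Set Atm) → Val)) (φ : Form Atm Val) :
    ∀ p : (toMDM S Φ).W, KSat (toMDM S Φ) p φ ↔ Sat S Φ p.val.1 p.val.2 φ := by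
  induction φ with
  | atom a => intro p; exact Iff.rfl
  | dec x => intro p; simp only [KSat, Sat, toMDM, Set.mem_singleton_iff, eq_comm]
  | neg φ ih => intro p; exact not_congr (ih p)
  | and φ ψ ih1 ih2 => intro p; exact and_congr (ih1 p) (ih2 p)
  | boxI φ ih =>
    intro p
    constructor
    · intro hK s' hs'
      have := hK ⟨(s', p.val.2), hs', p.2.2⟩ rfl
      exact (ih _).mp this
    · intro hS q hq
      have := (ih q).mpr (hq ▸ hS q.val.1 q.2.1)
      exact this
  | boxF φ ih =>
    intro p
    constructor
    · intro hK f' hf'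
      have := hK ⟨(p.val.1, f'), p.2.1, hf'⟩ rfl
      exact (ih _).mp this
    · intro hS q hq
      exact (ih q).mpr (hq ▸ hS q.val.2 q.2.2)

/-- The composition class of `w` under ∼I then ∼F. -/
def Cset (M : MDM Atm Val) (w : M.W) : Set M.W := {u | ∃ a, M.RI w a ∧ M.RF a u}

lemma Cset_self (M : MDM Atm Val) (w : M.W) : w ∈ Cset M w :=
  ⟨w, M.equivI.refl w, M.equivF.refl w⟩

lemma Cset_RF (M : MDM Atm Val) {w u v : M.W} (hu : u ∈ Cset M w) (h : M.RF u v) :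
    v ∈ Cset M w := by
  obtain ⟨a, h1, h2⟩ := hu
  exact ⟨a, h1, M.equivF.trans h2 h⟩

lemma Cset_RI (M : MDM Atm Val) {w u v : M.W} (hu : u ∈ Cset M w) (h : M.RI u v) :
    v ∈ Cset M w := by
  obtain ⟨a, h1, h2⟩ := hu
  obtain ⟨mid, hm1, hm2⟩ := (M.C1 a v).mpr ⟨u, h2, h⟩
  exact ⟨mid, M.equivI.trans h1 hm1, hm2⟩

open Classical in
/-- The classifier function associated to a world `u`. -/
noncomputable def fd (M : MDM Atm Val) (d : Val) (u : M.W) (s : Set Atm) : Val :=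
  if h : ∃ v, M.RI u v ∧ M.VA v = s then (M.C5 h.choose).choose else d

lemma fd_mem (M : MDM Atm Val) (d : Val) {u v : M.W} {s : Set Atm}
    (h1 : M.RI u v) (h2 : M.VA v = s) : fd M d u s ∈ M.VD v := by
  have h : ∃ v, M.RI u v ∧ M.VA v = s := ⟨v, h1, h2⟩
  rw [fd, dif_pos h]
  have hc := h.choose_spec
  have hVD : M.VD h.choose = M.VD v :=
    M.C2 _ _ (hc.2.trans h2.symm) (M.equivI.trans (M.equivI.symm hc.1) h1)
  exact hVD ▸ (M.C5 h.choose).choose_spec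

lemma fd_self (M : MDM Atm Val) (d : Val) (u : M.W) : fd M d u (M.VA u) ∈ M.VD u :=
  fd_mem M d (M.equivI.refl u) rfl

lemma fd_RI (M : MDM Atm Val) (d : Val) {u v : M.W} (h : M.RI u v) :
    fd M d u = fd M d v := by
  funext s
  by_cases hex : ∃ x, M.RI u x ∧ M.VA x = s
  · obtain ⟨x, hx1, hx2⟩ := hex
    have h1 := fd_mem M d hx1 hx2
    have h2 := fd_mem M d (M.equivI.trans (M.equivI.symm h) hx1) hx2
    exact M.C4 x _ _ h1 h2
  · have hex' : ¬ ∃ x, M.RI v x ∧ M.VA x = s := by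
      rintro ⟨x, hx1, hx2⟩; exact hex ⟨x, M.equivI.trans h hx1, hx2⟩
    rw [fd, fd, dif_neg hex, dif_neg hex']

lemma mdm_truth (M : MDM Atm Val) (w : M.W) (d : Val) (φ : Form Atm Val) :
    ∀ u ∈ Cset M w,
      KSat M u φ ↔
        Sat (M.VA '' Cset M w) (fd M d '' Cset M w) (M.VA u) (fd M d u) φ := by
  induction φ with
  | atom a => intro u _; exact Iff.rfl
  | dec x =>
    intro u _
    constructor
    · intro hx
      exact M.C4 u _ _ (fd_self M d u) hx
    · intro hx
      exact (show (fd M d u) (M.VA u) = x from hx) ▸ fd_self M d u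
  | neg φ ih => intro u hu; exact not_congr (ih u hu)
  | and φ ψ ih1 ih2 => intro u hu; exact and_congr (ih1 u hu) (ih2 u hu)
  | boxI φ ih =>
    intro u hu
    constructor
    · rintro hK s' ⟨v₀, hv₀, rfl⟩
      obtain ⟨a, ha1, ha2⟩ := hu
      obtain ⟨b, hb1, hb2⟩ := hv₀
      have hab : M.RI a b := M.equivI.trans (M.equivI.symm ha1) hb1
      obtain ⟨c, hc1, hc2⟩ := (M.C1 u b).mpr ⟨a, M.equivF.symm ha2, hab⟩
      have hcv : M.RF c v₀ := M.equivF.trans hc2 hb2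
      have hcC : c ∈ Cset M w := Cset_RI M ⟨a, ha1, ha2⟩ hc1
      have hres := (ih c hcC).mp (hK c hc1)
      have hVA : M.VA c = M.VA v₀ := M.C3 _ _ hcv
      rw [← hVA, fd_RI M d hc1]
      exact hres
    · intro hS v hv
      have hvC := Cset_RI M hu hv
      rw [ih v hvC, ← fd_RI M d hv]
      exact hS _ ⟨v, hvC, rfl⟩
  | boxF φ ih =>
    intro u hu
    constructor
    · rintro hK f' ⟨u₀, hu₀, rfl⟩
      obtain ⟨a, ha1, ha2⟩ := hu
      obtain ⟨a₀, ha₀1, ha₀2⟩ := hu₀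
      have haa₀ : M.RI a a₀ := M.equivI.trans (M.equivI.symm ha1) ha₀1
      obtain ⟨mid, hm1, hm2⟩ := (M.C1 a u₀).mp ⟨a₀, haa₀, ha₀2⟩
      have huv : M.RF u mid := M.equivF.trans (M.equivF.symm ha2) hm1
      have hmC : mid ∈ Cset M w := Cset_RF M ⟨a, ha1, ha2⟩ huv
      have hres := (ih mid hmC).mp (hK mid huv)
      rw [M.C3 u mid huv, ← fd_RI M d hm2]
      exact hres
    · intro hS v hv
      rw [ih v (Cset_RF M hu hv), (M.C3 u v hv).symm]
      exact hS _ ⟨v, Cset_RF M hu hv, rfl⟩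

/-- satisfiability relative to MCMs coincides with satisfiability
relative to MDMs. -/
theorem mcm_sat_iff_mdm_sat (φ : Form Atm Val) :
    (∃ (S : Set (Set Atm)) (Φ : Set ((Set Atm) → Val)) (s : Set Atm)
        (f : (Set Atm) → Val), s ∈ S ∧ f ∈ Φ ∧ Sat S Φ s f φ) ↔
    (∃ (M : MDM Atm Val) (w : M.W), KSat M w φ) := by
  constructor
  · rintro ⟨S, Φ, s, f, hs, hf, hSat⟩
    exact ⟨toMDM S Φ, ⟨(s, f), hs, hf⟩, (toMDM_truth S Φ φ _).mpr hSat⟩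
  · rintro ⟨M, w, hK⟩
    refine ⟨M.VA '' Cset M w, fd M (M.C5 w).choose '' Cset M w, M.VA w,
      fd M (M.C5 w).choose w, ⟨w, Cset_self M w, rfl⟩, ⟨w, Cset_self M w, rfl⟩, ?_⟩
    exact (mdm_truth M w (M.C5 w).choose φ w (Cset_self M w)).mp hK
end

section
/- Given any pointed MCM (Γ, s₀, f₀) with Γ = (S,Φ), the Kripke structure M with worlds W = S × Φ, relations (s,f) ∼I (s',f') iff f = f', (s,f) ∼F (s',f') iff s = s', and valuation V(s,f) = s ∪ {t(f(s))}, is a multi-decision model (i.e., satisfies constraints C1–C5), and for every formula φ and every (s,f) ∈ W, (Γ,s,f) ⊨ φ iff (M,(s,f)) ⊨ φ. -/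
variable {Atm Val : Type}

/-- Kripke satisfaction over raw model data (worlds, two relations, valuations). -/
def KSatGen {W : Type} (RI RF : W → W → Prop) (VA : W → Set Atm) (VD : W → Set Val) :
    W → Form Atm Val → Prop
  | w, .atom p => p ∈ VA w
  | w, .dec x => x ∈ VD w
  | w, .neg φ => ¬ KSatGen RI RF VA VD w φ
  | w, .and φ ψ => KSatGen RI RF VA VD w φ ∧ KSatGen RI RF VA VD w ψ
  | w, .boxI φ => ∀ v, RI w v → KSatGen RI RF VA VD v φ
  | w, .boxF φ => ∀ v, RF w v → KSatGen RI RF VA VD v φ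

/-- the product Kripke structure built from a pointed MCM is an MDM
(satisfies C1–C5) and satisfies the same formulas as the MCM. -/
theorem mcm_to_mdm_construction (S : Set (Set Atm)) (Φ : Set ((Set Atm) → Val))
    (s₀ : Set Atm) (f₀ : (Set Atm) → Val) (hs₀ : s₀ ∈ S) (hf₀ : f₀ ∈ Φ) :
    let W := {p : (Set Atm) × ((Set Atm) → Val) // p.1 ∈ S ∧ p.2 ∈ Φ}
    let RI : W → W → Prop := fun a b => a.1.2 = b.1.2
    let RF : W → W → Prop := fun a b => a.1.1 = b.1.1
    let VA : W → Set Atm := fun a => a.1.1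
    let VD : W → Set Val := fun a => {a.1.2 a.1.1}
    (Equivalence RI ∧ Equivalence RF ∧
      (∀ w v : W, (∃ u, RI w u ∧ RF u v) ↔ (∃ u, RF w u ∧ RI u v)) ∧
      (∀ w v : W, VA w = VA v → RI w v → VD w = VD v) ∧
      (∀ w v : W, RF w v → VA w = VA v) ∧
      (∀ (w : W) (x y : Val), x ∈ VD w → y ∈ VD w → x = y) ∧
      (∀ w : W, ∃ x : Val, x ∈ VD w)) ∧
    ∀ (w : W) (φ : Form Atm Val),
      Sat S Φ w.1.1 w.1.2 φ ↔ KSatGen RI RF VA VD w φ := by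
  intro W RI RF VA VD
  constructor
  · refine ⟨⟨fun _ => rfl, Eq.symm, Eq.trans⟩, ⟨fun _ => rfl, Eq.symm, Eq.trans⟩, ?_, ?_, ?_, ?_, ?_⟩
    · intro w v
      constructor
      · rintro ⟨u, h1, h2⟩
        exact ⟨⟨(w.1.1, v.1.2), w.2.1, v.2.2⟩, rfl, rfl⟩
      · rintro ⟨u, h1, h2⟩
        exact ⟨⟨(v.1.1, w.1.2), v.2.1, w.2.2⟩, rfl, rfl⟩
    · intro w v hA hI
      simp only [VD, VA] at *
      rw [hA, hI]
    · intro w v h; exact h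
    · intro w x y hx hy
      simp only [VD, Set.mem_singleton_iff] at hx hy
      rw [hx, hy]
    · intro w; exact ⟨w.1.2 w.1.1, rfl⟩
  · intro w φ
    induction φ generalizing w with
    | atom p => exact Iff.rfl
    | dec x => simp [Sat, KSatGen, VD, eq_comm]
    | neg φ ih => simp only [Sat, KSatGen]; exact not_congr (ih w)
    | and φ ψ ih1 ih2 => simp only [Sat, KSatGen]; exact and_congr (ih1 w) (ih2 w)
    | boxI φ ih =>
      simp only [Sat, KSatGen]
      constructor
      · intro h v hv
        rw [← ih v]
        have := h v.1.1 v.2.1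
        simp only [RI] at hv
        rwa [hv] at this
      · intro h s' hs'
        have := h ⟨(s', w.1.2), hs', w.2.2⟩ rfl
        rw [← ih] at this
        exact this
    | boxF φ ih =>
      simp only [Sat, KSatGen]
      constructor
      · intro h v hv
        rw [← ih v]
        have := h v.1.2 v.2.2
        simp only [RF] at hv
        rwa [hv] at this
      · intro h f' hf'
        have := h ⟨(w.1.1, f'), w.2.1, hf'⟩ rfl
        rw [← ih] at this
        exact this
end

section
/- Given a finite quasi-MDM M = (W, ∼I, ∼F, V), a formula φ, and an injection g : W → Atm₀ \ Atm(φ), define V'(w) = (V(w) \ {g(v) : v ∈ W, v ≠ w}) ∪ {g(w)} and M' = (W, ∼I, ∼F, V'). Then M' satisfies the functionality constraint C2 (distinct worlds have distinct Atm₀-valuations), and for every world v and every formula ψ whose atoms lie in Atm(φ), (M,v) ⊨ ψ iff (M',v) ⊨ ψ. -/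
variable {Atm Val : Type}

/-- The set of atomic propositions occurring in a formula. -/
def Form.atoms : Form Atm Val → Set Atm
  | .atom p => {p}
  | .dec _ => ∅
  | .neg φ => φ.atoms
  | .and φ ψ => φ.atoms ∪ ψ.atoms
  | .boxI φ => φ.atoms
  | .boxF φ => φ.atoms

/-- relabelling the valuation of a finite quasi-MDM by fresh atoms
yields a model satisfying C2 (indeed distinct worlds get distinct atomic
valuations) and satisfying the same formulas built from atoms of φ. -/
theorem fresh_atoms_give_functionality {W : Type} [Finite W]
    (RI RF : W → W → Prop) (equivI : Equivalence RI) (equivF : Equivalence RF)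
    (VA : W → Set Atm) (VD : W → Set Val)
    (C1 : ∀ w v, (∃ u, RI w u ∧ RF u v) ↔ (∃ u, RF w u ∧ RI u v))
    (C3 : ∀ w v, RF w v → VA w = VA v)
    (C4 : ∀ w, ∀ x y : Val, x ∈ VD w → y ∈ VD w → x = y)
    (C5 : ∀ w, ∃ x : Val, x ∈ VD w)
    (φ : Form Atm Val) (g : W → Atm) (hg : Function.Injective g)
    (hfresh : ∀ w, g w ∉ φ.atoms) :
    let VA' : W → Set Atm :=
      fun w => (VA w \ {a | ∃ v, v ≠ w ∧ a = g v}) ∪ {g w}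
    (∀ w v : W, w ≠ v → VA' w ≠ VA' v) ∧
    (∀ w v : W, VA' w = VA' v → RI w v → VD w = VD v) ∧
    (∀ (v : W) (ψ : Form Atm Val), ψ.atoms ⊆ φ.atoms →
      (KSatGen RI RF VA VD v ψ ↔ KSatGen RI RF VA' VD v ψ)) := by
  intro VA'
  have key : ∀ w v : W, w ≠ v → VA' w ≠ VA' v := by
    intro w v hwv h
    have h1 : g w ∈ VA' w := by simp only [VA']; exact Or.inr rfl
    rw [h] at h1
    simp only [VA', Set.mem_union, Set.mem_diff, Set.mem_setOf_eq,
      Set.mem_singleton_iff] at h1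
    rcases h1 with ⟨_, h1⟩ | h1
    · exact h1 ⟨w, hwv, rfl⟩
    · exact hwv (hg h1)
  refine ⟨key, ?_, ?_⟩
  · intro w v h _
    by_cases hwv : w = v
    · rw [hwv]
    · exact absurd h (key w v hwv)
  · intro v ψ hsub
    induction ψ generalizing v with
    | atom p =>
      have hp : p ∈ φ.atoms := hsub rfl
      simp only [KSatGen, VA', Set.mem_union, Set.mem_diff, Set.mem_setOf_eq,
        Set.mem_singleton_iff]
      constructor
      · intro h
        exact Or.inl ⟨h, fun ⟨u, _, hu⟩ => hfresh u (hu ▸ hp)⟩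
      · rintro (⟨h, _⟩ | h)
        · exact h
        · exact absurd hp (h ▸ hfresh v)
    | dec x => exact Iff.rfl
    | neg ψ ih => exact not_congr (ih v hsub)
    | and ψ χ ih1 ih2 =>
      exact and_congr (ih1 v (fun a ha => hsub (Or.inl ha)))
        (ih2 v (fun a ha => hsub (Or.inr ha)))
    | boxI ψ ih =>
      exact forall_congr' fun u => imp_congr Iff.rfl (ih u hsub)
    | boxF ψ ih =>
      exact forall_congr' fun u => imp_congr Iff.rfl (ih u hsub)
end

section
/- Satisfiability in quasi-MDMs has the finite model property: a formula φ is satisfiable relative to the class of quasi-MDMs if and only if it is satisfiable relative to the class of finite quasi-MDMs. -/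
variable {Atm Val : Type}

/-- A quasi-MDM: like an MDM but possibly violating the functionality
constraint C2. -/
structure QMDM (Atm Val : Type) where
  W : Type
  RI : W → W → Prop
  RF : W → W → Prop
  equivI : Equivalence RI
  equivF : Equivalence RF
  VA : W → Set Atm
  VD : W → Set Val
  /-- C1: the relations commute. -/
  C1 : ∀ w v, (∃ u, RI w u ∧ RF u v) ↔ (∃ u, RF w u ∧ RI u v)
  /-- C3: ∼F-related worlds agree on atoms. -/
  C3 : ∀ w v, RF w v → VA w = VA v
  /-- C4: at most one decision atom per world. -/
  C4 : ∀ w, ∀ x y : Val, x ∈ VD w → y ∈ VD w → x = y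
  /-- C5: at least one decision atom per world. -/
  C5 : ∀ w, ∃ x : Val, x ∈ VD w

/-- The functionality constraint C2; a quasi-MDM satisfying it is an MDM. -/
def QMDM.FunctC2 (M : QMDM Atm Val) : Prop :=
  ∀ w v, M.VA w = M.VA v → M.RI w v → M.VD w = M.VD v

/-- Kripke satisfaction in a quasi-MDM. -/
def QSat (M : QMDM Atm Val) : M.W → Form Atm Val → Prop
  | w, .atom p => p ∈ M.VA w
  | w, .dec x => x ∈ M.VD w
  | w, .neg φ => ¬ QSat M w φ
  | w, .and φ ψ => QSat M w φ ∧ QSat M w ψ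
  | w, .boxI φ => ∀ v, M.RI w v → QSat M v φ
  | w, .boxF φ => ∀ v, M.RF w v → QSat M v φ

namespace QFMP

variable {Atm Val : Type}

/-- List of subformulas. -/
def sfL : Form Atm Val → List (Form Atm Val)
  | .atom p => [.atom p]
  | .dec x => [.dec x]
  | .neg ψ => .neg ψ :: sfL ψ
  | .and ψ χ => .and ψ χ :: (sfL ψ ++ sfL χ)
  | .boxI ψ => .boxI ψ :: sfL ψ
  | .boxF ψ => .boxF ψ :: sfL ψ

lemma self_mem_sfL (φ : Form Atm Val) : φ ∈ sfL φ := by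
  cases φ <;> simp [sfL]

lemma sfL_closed : ∀ (φ χ : Form Atm Val), χ ∈ sfL φ → sfL χ ⊆ sfL φ := by
  intro φ
  induction φ with
  | atom p => intro χ h; simp [sfL] at h; subst h; exact fun _ => id
  | dec x => intro χ h; simp [sfL] at h; subst h; exact fun _ => id
  | neg ψ ih =>
      intro χ h
      rcases List.mem_cons.mp h with rfl | h
      · exact fun _ => id
      · exact fun x hx => List.mem_cons_of_mem _ (ih χ h hx)
  | and ψ₁ ψ₂ ih₁ ih₂ =>
      intro χ h
      rcases List.mem_cons.mp h with rfl | h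
      · exact fun _ => id
      · rcases List.mem_append.mp h with h | h
        · exact fun x hx => List.mem_cons_of_mem _ (List.mem_append.mpr (Or.inl (ih₁ χ h hx)))
        · exact fun x hx => List.mem_cons_of_mem _ (List.mem_append.mpr (Or.inr (ih₂ χ h hx)))
  | boxI ψ ih =>
      intro χ h
      rcases List.mem_cons.mp h with rfl | h
      · exact fun _ => id
      · exact fun x hx => List.mem_cons_of_mem _ (ih χ h hx)
  | boxF ψ ih =>
      intro χ h
      rcases List.mem_cons.mp h with rfl | h
      · exact fun _ => id
      · exact fun x hx => List.mem_cons_of_mem _ (ih χ h hx)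

lemma boxI_inv (M : QMDM Atm Val) {u v : M.W} (h : M.RI u v) (ψ : Form Atm Val) :
    QSat M u (.boxI ψ) ↔ QSat M v (.boxI ψ) := by
  simp only [QSat]
  constructor
  · intro H t ht; exact H t (M.equivI.trans h ht)
  · intro H t ht; exact H t (M.equivI.trans (M.equivI.symm h) ht)

lemma boxF_inv (M : QMDM Atm Val) {u v : M.W} (h : M.RF u v) (ψ : Form Atm Val) :
    QSat M u (.boxF ψ) ↔ QSat M v (.boxF ψ) := by
  simp only [QSat]
  constructor
  · intro H t ht; exact H t (M.equivF.trans h ht)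
  · intro H t ht; exact H t (M.equivF.trans (M.equivF.symm h) ht)

/-- The composite relation ∼I ∘ ∼F. -/
def Comp (M : QMDM Atm Val) (w v : M.W) : Prop := ∃ u, M.RI w u ∧ M.RF u v

lemma comp_refl (M : QMDM Atm Val) (w : M.W) : Comp M w w :=
  ⟨w, M.equivI.refl w, M.equivF.refl w⟩

lemma comp_symm {M : QMDM Atm Val} {w v : M.W} (h : Comp M w v) : Comp M v w := by
  obtain ⟨u, h1, h2⟩ := h
  exact (M.C1 v w).mpr ⟨u, M.equivF.symm h2, M.equivI.symm h1⟩

lemma comp_trans {M : QMDM Atm Val} {w v t : M.W} (h1 : Comp M w v) (h2 : Comp M v t) :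
    Comp M w t := by
  obtain ⟨a, ha1, ha2⟩ := h1
  obtain ⟨b, hb1, hb2⟩ := h2
  obtain ⟨c, hc1, hc2⟩ := (M.C1 a b).mpr ⟨v, ha2, hb1⟩
  exact ⟨c, M.equivI.trans ha1 hc1, M.equivF.trans hc2 hb2⟩

variable (M : QMDM Atm Val) (w0 : M.W) (φ : Form Atm Val)

/-- Generated submodel worlds. -/
def W0 := {u : M.W // Comp M w0 u}

/-- Filtration setoid: agreement on all subformulas of φ. -/
def st : Setoid (W0 M w0) :=
  ⟨fun u v => ∀ ψ ∈ sfL φ, (QSat M u.1 ψ ↔ QSat M v.1 ψ),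
   ⟨fun _ _ _ => Iff.rfl, fun h ψ hm => (h ψ hm).symm,
    fun h1 h2 ψ hm => (h1 ψ hm).trans (h2 ψ hm)⟩⟩

abbrev Wq := Quotient (st M w0 φ)

def mk (u : W0 M w0) : Wq M w0 φ := Quotient.mk _ u

def fI (u v : W0 M w0) : Prop :=
  ∀ ψ, Form.boxI ψ ∈ sfL φ → (QSat M u.1 (.boxI ψ) ↔ QSat M v.1 (.boxI ψ))

def fF (u v : W0 M w0) : Prop :=
  (∀ ψ, Form.boxF ψ ∈ sfL φ → (QSat M u.1 (.boxF ψ) ↔ QSat M v.1 (.boxF ψ))) ∧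
  (∀ p, Form.atom p ∈ sfL φ → (p ∈ M.VA u.1 ↔ p ∈ M.VA v.1))

def RI' : Wq M w0 φ → Wq M w0 φ → Prop :=
  Quotient.lift₂ (fI M w0 φ) (by
    intro a b a' b' ha hb
    apply propext
    constructor
    · intro h ψ hm; exact ((ha _ hm).symm.trans (h ψ hm)).trans (hb _ hm)
    · intro h ψ hm; exact ((ha _ hm).trans (h ψ hm)).trans (hb _ hm).symm)

def RF' : Wq M w0 φ → Wq M w0 φ → Prop :=
  Quotient.lift₂ (fF M w0 φ) (by
    intro a b a' b' ha hb
    apply propext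
    constructor
    · intro h
      exact ⟨fun ψ hm => ((ha _ hm).symm.trans (h.1 ψ hm)).trans (hb _ hm),
             fun p hm => ((ha (.atom p) hm).symm.trans (h.2 p hm)).trans (hb (.atom p) hm)⟩
    · intro h
      exact ⟨fun ψ hm => ((ha _ hm).trans (h.1 ψ hm)).trans (hb _ hm).symm,
             fun p hm => ((ha (.atom p) hm).trans (h.2 p hm)).trans (hb (.atom p) hm).symm⟩)

def VA' : Wq M w0 φ → Set Atm :=
  Quotient.lift (fun u => {p | Form.atom p ∈ sfL φ ∧ p ∈ M.VA u.1}) (by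
    intro a b hab
    ext p
    simp only [Set.mem_setOf_eq]
    exact and_congr_right fun hm => hab (.atom p) hm)

def VD' : Wq M w0 φ → Set Val := fun q => M.VD q.out.1

lemma midIF (q r : Wq M w0 φ) : ∃ t, RI' M w0 φ q t ∧ RF' M w0 φ t r := by
  obtain ⟨u, rfl⟩ := Quotient.exists_rep q
  obtain ⟨v, rfl⟩ := Quotient.exists_rep r
  obtain ⟨m, h1, h2⟩ : Comp M u.1 v.1 := comp_trans (comp_symm u.2) v.2
  have hm : Comp M w0 m := comp_trans u.2 ⟨m, h1, M.equivF.refl m⟩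
  refine ⟨mk M w0 φ ⟨m, hm⟩, fun ψ _ => boxI_inv M h1 ψ,
    fun ψ _ => boxF_inv M h2 ψ, fun p _ => by rw [M.C3 _ _ h2]⟩

lemma midFI (q r : Wq M w0 φ) : ∃ t, RF' M w0 φ q t ∧ RI' M w0 φ t r := by
  obtain ⟨u, rfl⟩ := Quotient.exists_rep q
  obtain ⟨v, rfl⟩ := Quotient.exists_rep r
  obtain ⟨m, h1, h2⟩ := (M.C1 u.1 v.1).mp (comp_trans (comp_symm u.2) v.2)
  have hm : Comp M w0 m := comp_trans u.2 ⟨u.1, M.equivI.refl u.1, h1⟩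
  refine ⟨mk M w0 φ ⟨m, hm⟩,
    ⟨fun ψ _ => boxF_inv M h1 ψ, fun p _ => by rw [M.C3 _ _ h1]⟩,
    fun ψ _ => boxI_inv M h2 ψ⟩

/-- The filtrated finite quasi-MDM. -/
def FM : QMDM Atm Val where
  W := Wq M w0 φ
  RI := RI' M w0 φ
  RF := RF' M w0 φ
  equivI := by
    refine ⟨fun q => ?_, fun {q r} h => ?_, fun {q r s} h1 h2 => ?_⟩
    · obtain ⟨u, rfl⟩ := Quotient.exists_rep q
      exact fun ψ _ => Iff.rfl
    · obtain ⟨u, rfl⟩ := Quotient.exists_rep q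
      obtain ⟨v, rfl⟩ := Quotient.exists_rep r
      exact fun ψ hm => (h ψ hm).symm
    · obtain ⟨u, rfl⟩ := Quotient.exists_rep q
      obtain ⟨v, rfl⟩ := Quotient.exists_rep r
      obtain ⟨t, rfl⟩ := Quotient.exists_rep s
      exact fun ψ hm => (h1 ψ hm).trans (h2 ψ hm)
  equivF := by
    refine ⟨fun q => ?_, fun {q r} h => ?_, fun {q r s} h1 h2 => ?_⟩
    · obtain ⟨u, rfl⟩ := Quotient.exists_rep q
      exact ⟨fun ψ _ => Iff.rfl, fun p _ => Iff.rfl⟩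
    · obtain ⟨u, rfl⟩ := Quotient.exists_rep q
      obtain ⟨v, rfl⟩ := Quotient.exists_rep r
      exact ⟨fun ψ hm => (h.1 ψ hm).symm, fun p hm => (h.2 p hm).symm⟩
    · obtain ⟨u, rfl⟩ := Quotient.exists_rep q
      obtain ⟨v, rfl⟩ := Quotient.exists_rep r
      obtain ⟨t, rfl⟩ := Quotient.exists_rep s
      exact ⟨fun ψ hm => (h1.1 ψ hm).trans (h2.1 ψ hm),
             fun p hm => (h1.2 p hm).trans (h2.2 p hm)⟩
  VA := VA' M w0 φ
  VD := VD' M w0 φ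
  C1 := fun q r => iff_of_true (midIF M w0 φ q r) (midFI M w0 φ q r)
  C3 := by
    intro q r h
    obtain ⟨u, rfl⟩ := Quotient.exists_rep q
    obtain ⟨v, rfl⟩ := Quotient.exists_rep r
    ext p
    simp only [VA', Quotient.lift_mk, Set.mem_setOf_eq]
    exact and_congr_right fun hm => h.2 p hm
  C4 := fun q x y hx hy => M.C4 q.out.1 x y hx hy
  C5 := fun q => M.C5 q.out.1

lemma out_equiv (u : W0 M w0) :
    ∀ ψ ∈ sfL φ, (QSat M (Quotient.out (mk M w0 φ u)).1 ψ ↔ QSat M u.1 ψ) :=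
  Quotient.exact (Quotient.out_eq (mk M w0 φ u))

lemma truth : ∀ ψ : Form Atm Val, ψ ∈ sfL φ → ∀ u : W0 M w0,
    (QSat (FM M w0 φ) (mk M w0 φ u) ψ ↔ QSat M u.1 ψ) := by
  intro ψ
  induction ψ with
  | atom p =>
      intro hm u
      show (Form.atom p ∈ sfL φ ∧ p ∈ M.VA u.1) ↔ p ∈ M.VA u.1
      exact ⟨fun h => h.2, fun h => ⟨hm, h⟩⟩
  | dec x =>
      intro hm u
      exact out_equiv M w0 φ u (.dec x) hm
  | neg ψ ih =>
      intro hm u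
      have hψ : ψ ∈ sfL φ := sfL_closed φ _ hm (List.mem_cons_of_mem _ (self_mem_sfL ψ))
      exact not_congr (ih hψ u)
  | and ψ₁ ψ₂ ih₁ ih₂ =>
      intro hm u
      have h1 : ψ₁ ∈ sfL φ :=
        sfL_closed φ _ hm (List.mem_cons_of_mem _ (List.mem_append.mpr (Or.inl (self_mem_sfL ψ₁))))
      have h2 : ψ₂ ∈ sfL φ :=
        sfL_closed φ _ hm (List.mem_cons_of_mem _ (List.mem_append.mpr (Or.inr (self_mem_sfL ψ₂))))
      exact and_congr (ih₁ h1 u) (ih₂ h2 u)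
  | boxI ψ ih =>
      intro hm u
      have hψ : ψ ∈ sfL φ := sfL_closed φ _ hm (List.mem_cons_of_mem _ (self_mem_sfL ψ))
      simp only [QSat]
      constructor
      · intro H v hv
        have hvW : Comp M w0 v := comp_trans u.2 ⟨v, hv, M.equivF.refl v⟩
        exact (ih hψ ⟨v, hvW⟩).mp (H (mk M w0 φ ⟨v, hvW⟩) (fun χ _ => boxI_inv M hv χ))
      · intro H r hr
        obtain ⟨v, rfl⟩ := Quotient.exists_rep r
        have h2 : QSat M v.1 (.boxI ψ) := (hr ψ hm).mp H
        exact (ih hψ v).mpr (h2 v.1 (M.equivI.refl v.1))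
  | boxF ψ ih =>
      intro hm u
      have hψ : ψ ∈ sfL φ := sfL_closed φ _ hm (List.mem_cons_of_mem _ (self_mem_sfL ψ))
      simp only [QSat]
      constructor
      · intro H v hv
        have hvW : Comp M w0 v := comp_trans u.2 ⟨u.1, M.equivI.refl u.1, hv⟩
        exact (ih hψ ⟨v, hvW⟩).mp (H (mk M w0 φ ⟨v, hvW⟩)
          ⟨fun χ _ => boxF_inv M hv χ, fun p _ => by rw [M.C3 _ _ hv]⟩)
      · intro H r hr
        obtain ⟨v, rfl⟩ := Quotient.exists_rep r
        have h2 : QSat M v.1 (.boxF ψ) := (hr.1 ψ hm).mp H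
        exact (ih hψ v).mpr (h2 v.1 (M.equivF.refl v.1))

lemma finiteWq : Finite (Wq M w0 φ) := by
  apply Finite.of_injective
    (fun q : Wq M w0 φ => fun i : Fin (sfL φ).length => QSat M q.out.1 ((sfL φ).get i))
  intro q r h
  rw [← Quotient.out_eq q, ← Quotient.out_eq r]
  apply Quotient.sound
  intro ψ hψ
  obtain ⟨i, hi⟩ := List.mem_iff_get.mp hψ
  subst hi
  exact iff_of_eq (congrFun h i)

end QFMP

/-- satisfiability in quasi-MDMs has the finite model property. -/
theorem qmdm_finite_model_property (φ : Form Atm Val) :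
    (∃ (M : QMDM Atm Val) (w : M.W), QSat M w φ) ↔
    (∃ M : QMDM Atm Val, Finite M.W ∧ ∃ w : M.W, QSat M w φ) := by
  constructor
  · rintro ⟨M, w0, h⟩
    exact ⟨QFMP.FM M w0 φ, QFMP.finiteWq M w0 φ, QFMP.mk M w0 φ ⟨w0, QFMP.comp_refl M w0⟩,
      (QFMP.truth M w0 φ φ (QFMP.self_mem_sfL φ) _).mpr h⟩
  · rintro ⟨M, _, w, h⟩
    exact ⟨M, w, h⟩
end

section
/- In a generated quasi-MDM, the commutation property is universal: if M' is the submodel of a quasi-MDM M generated from w₀ through the relation ∼I ∘ ∼F, then for all worlds v, u of M', both v (∼I' ∘ ∼F') u and v (∼F' ∘ ∼I') u hold. -/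
/-- in the submodel of a quasi-MDM generated from w₀ through
∼I ∘ ∼F, both composed relations are total. -/
theorem generated_submodel_commutation_total {W : Type}
    (RI RF : W → W → Prop) (equivI : Equivalence RI) (equivF : Equivalence RF)
    (C1 : ∀ w v, (∃ u, RI w u ∧ RF u v) ↔ (∃ u, RF w u ∧ RI u v))
    (w₀ : W) :
    let W' := {v : W // ∃ u, RI w₀ u ∧ RF u v}
    ∀ a b : W',
      (∃ c : W', RI a.1 c.1 ∧ RF c.1 b.1) ∧ (∃ c : W', RF a.1 c.1 ∧ RI c.1 b.1) := by
  intro W' a b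
  obtain ⟨p, hIp, hFp⟩ := a.2
  obtain ⟨q, hIq, hFq⟩ := b.2
  have hpq : RI p q := equivI.trans (equivI.symm hIp) hIq
  -- first component
  obtain ⟨m, hIam, hFmq⟩ := (C1 a.1 q).mpr ⟨p, equivF.symm hFp, hpq⟩
  have hFmb : RF m b.1 := equivF.trans hFmq hFq
  have hm : ∃ u, RI w₀ u ∧ RF u m := ⟨q, hIq, equivF.symm hFmq⟩
  refine ⟨⟨⟨m, hm⟩, hIam, hFmb⟩, ?_⟩
  -- second component
  obtain ⟨n, hFan, hInb⟩ := (C1 a.1 b.1).mp ⟨m, hIam, hFmb⟩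
  obtain ⟨u, hIqu, hFun⟩ := (C1 q n).mpr ⟨b.1, hFq, equivI.symm hInb⟩
  exact ⟨⟨n, ⟨u, equivI.trans hIq hIqu, hFun⟩⟩, hFan, hInb⟩
end

section
/- The reduction axiom for □F under model update is valid: for every MCM Γ = (S,Φ), s ∈ S, f ∈ Φ, and formulas φ, ψ: (Γ,s,f) ⊨ [φ]□F ψ if and only if (Γ,s,f) ⊨ □I φ → □F [φ]ψ. -/
/-- Formulas of the dynamic language L^dyn, with update operators [φ]ψ. -/
inductive DForm (Atm Val : Type) : Type
  | atom : Atm → DForm Atm Val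
  | dec  : Val → DForm Atm Val
  | neg  : DForm Atm Val → DForm Atm Val
  | and  : DForm Atm Val → DForm Atm Val → DForm Atm Val
  | boxI : DForm Atm Val → DForm Atm Val
  | boxF : DForm Atm Val → DForm Atm Val
  | upd  : DForm Atm Val → DForm Atm Val → DForm Atm Val

variable {Atm Val : Type}

def DForm.impl (φ ψ : DForm Atm Val) : DForm Atm Val := .neg (.and φ (.neg ψ))

/-- Satisfaction for L^dyn. The update [φ]ψ restricts Φ to the classifiers
globally satisfying φ, provided the actual classifier globally satisfies φ. -/
def DSat (S : Set (Set Atm)) :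
    Set ((Set Atm) → Val) → (Set Atm) → ((Set Atm) → Val) → DForm Atm Val → Prop
  | _, s, _, .atom p => p ∈ s
  | _, s, f, .dec x => f s = x
  | Φ, s, f, .neg φ => ¬ DSat S Φ s f φ
  | Φ, s, f, .and φ ψ => DSat S Φ s f φ ∧ DSat S Φ s f ψ
  | Φ, _, f, .boxI φ => ∀ s' ∈ S, DSat S Φ s' f φ
  | Φ, s, _, .boxF φ => ∀ f' ∈ Φ, DSat S Φ s f' φ
  | Φ, s, f, .upd φ ψ =>
      (∀ s' ∈ S, DSat S Φ s' f φ) →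
        DSat S {f' | f' ∈ Φ ∧ ∀ s' ∈ S, DSat S Φ s' f' φ} s f ψ

/-- the reduction axiom [φ]□Fψ ↔ (□Iφ → □F[φ]ψ) is valid. -/
theorem reduction_boxF_valid (S : Set (Set Atm)) (Φ : Set ((Set Atm) → Val))
    (s : Set Atm) (f : (Set Atm) → Val) (hs : s ∈ S) (hf : f ∈ Φ)
    (φ ψ : DForm Atm Val) :
    DSat S Φ s f (.upd φ (.boxF ψ)) ↔
      DSat S Φ s f ((DForm.boxI φ).impl (.boxF (.upd φ ψ))) := by
  simp only [DForm.impl, DSat]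
  constructor
  · rintro h ⟨hI, hF⟩
    exact hF fun f' hf' hI' => h hI f' ⟨hf', hI'⟩
  · intro h hI f' hf'
    by_contra hne
    exact h ⟨hI, fun hF => hne (hF f' hf'.1 hf'.2)⟩
end

section
/- All reduction axioms of the dynamic logic D-PLC are valid over MCMs: for all Γ, s ∈ S, f ∈ Φ, atoms p, values x, and formulas φ, ψ, ψ₁, ψ₂: [φ]p ↔ (□Iφ → p); [φ]t(x) ↔ (□Iφ → t(x)); [φ]¬ψ ↔ (□Iφ → ¬[φ]ψ); [φ](ψ₁∧ψ₂) ↔ ([φ]ψ₁ ∧ [φ]ψ₂); [φ]□I ψ ↔ (□Iφ → □I[φ]ψ); and [φ]□F ψ ↔ (□Iφ → □F[φ]ψ). -/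
variable {Atm Val : Type}

/-- all six reduction axioms of D-PLC are valid over MCMs. -/
theorem reduction_axioms_valid (S : Set (Set Atm)) (Φ : Set ((Set Atm) → Val))
    (s : Set Atm) (f : (Set Atm) → Val) (hs : s ∈ S) (hf : f ∈ Φ)
    (p : Atm) (x : Val) (φ ψ ψ₁ ψ₂ : DForm Atm Val) :
    (DSat S Φ s f (.upd φ (.atom p)) ↔
      DSat S Φ s f ((DForm.boxI φ).impl (.atom p))) ∧
    (DSat S Φ s f (.upd φ (.dec x)) ↔
      DSat S Φ s f ((DForm.boxI φ).impl (.dec x))) ∧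
    (DSat S Φ s f (.upd φ (.neg ψ)) ↔
      DSat S Φ s f ((DForm.boxI φ).impl (.neg (.upd φ ψ)))) ∧
    (DSat S Φ s f (.upd φ (.and ψ₁ ψ₂)) ↔
      DSat S Φ s f (.and (.upd φ ψ₁) (.upd φ ψ₂))) ∧
    (DSat S Φ s f (.upd φ (.boxI ψ)) ↔
      DSat S Φ s f ((DForm.boxI φ).impl (.boxI (.upd φ ψ)))) ∧
    (DSat S Φ s f (.upd φ (.boxF ψ)) ↔
      DSat S Φ s f ((DForm.boxI φ).impl (.boxF (.upd φ ψ)))) := by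
  refine ⟨?_, ?_, ?_, ?_, ?_, ?_⟩ <;>
    simp only [DSat, DForm.impl, Set.mem_setOf_eq, not_and, not_not] <;>
    tauto
end

section
/- Every formula of the dynamic language L^dyn is semantically equivalent over MCMs to a formula of the static language L (i.e., without dynamic operators [φ]): there is a translation t : L^dyn → L such that for every pointed MCM (Γ,s,f) and χ ∈ L^dyn, (Γ,s,f) ⊨ χ iff (Γ,s,f) ⊨ t(χ). -/
variable {Atm Val : Type}

/-- A formula of L^dyn is static if it contains no update operator. -/
def DForm.static : DForm Atm Val → Prop
  | .atom _ => True
  | .dec _ => True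
  | .neg φ => φ.static
  | .and φ ψ => φ.static ∧ ψ.static
  | .boxI φ => φ.static
  | .boxF φ => φ.static
  | .upd _ _ => False

namespace Hidden
variable {Atm Val : Type}

lemma impl_iff (S : Set (Set Atm)) (Φ : Set ((Set Atm) → Val)) (s f)
    (a b : DForm Atm Val) :
    DSat S Φ s f (a.impl b) ↔ (DSat S Φ s f a → DSat S Φ s f b) := by
  simp [DForm.impl, DSat]

/-- Relativization: pushes one update through a static formula. -/
def relApp (φ : DForm Atm Val) : DForm Atm Val → DForm Atm Val
  | .atom p => (DForm.boxI φ).impl (.atom p)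
  | .dec x => (DForm.boxI φ).impl (.dec x)
  | .neg ψ => (DForm.boxI φ).impl (.neg (relApp φ ψ))
  | .and ψ₁ ψ₂ => .and (relApp φ ψ₁) (relApp φ ψ₂)
  | .boxI ψ => (DForm.boxI φ).impl (.boxI (relApp φ ψ))
  | .boxF ψ => (DForm.boxI φ).impl (.boxF ((DForm.boxI φ).impl (relApp φ ψ)))
  | .upd ψ₁ _ => relApp φ ψ₁

lemma relApp_static {φ : DForm Atm Val} (hφ : φ.static) :
    ∀ ψ, (relApp φ ψ).static := by
  intro ψ; induction ψ <;> simp_all [relApp, DForm.impl, DForm.static]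

lemma relApp_correct {ψ : DForm Atm Val} (hψ : ψ.static) :
    ∀ (φ : DForm Atm Val) (S : Set (Set Atm)) (Φ : Set ((Set Atm) → Val)) s f,
      DSat S Φ s f (.upd φ ψ) ↔ DSat S Φ s f (relApp φ ψ) := by
  induction ψ with
  | atom p =>
      intro φ S Φ s f
      show _ ↔ DSat S Φ s f ((DForm.boxI φ).impl (.atom p))
      rw [impl_iff]; exact Iff.rfl
  | dec x =>
      intro φ S Φ s f
      show _ ↔ DSat S Φ s f ((DForm.boxI φ).impl (.dec x))
      rw [impl_iff]; exact Iff.rfl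
  | neg ψ ih =>
      intro φ S Φ s f
      show ((∀ s' ∈ S, DSat S Φ s' f φ) → ¬ _) ↔
        DSat S Φ s f ((DForm.boxI φ).impl (.neg (relApp φ ψ)))
      rw [impl_iff]
      constructor
      · intro h hI hrel
        exact h hI ((ih hψ φ S Φ s f).mpr hrel hI)
      · intro h hI hψ'
        exact h hI ((ih hψ φ S Φ s f).mp (fun _ => hψ'))
  | and ψ₁ ψ₂ ih₁ ih₂ =>
      intro φ S Φ s f
      show ((∀ s' ∈ S, DSat S Φ s' f φ) → _ ∧ _) ↔
        (DSat S Φ s f (relApp φ ψ₁) ∧ DSat S Φ s f (relApp φ ψ₂))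
      rw [← ih₁ hψ.1, ← ih₂ hψ.2]
      show _ ↔ (((∀ s' ∈ S, DSat S Φ s' f φ) → _) ∧ ((∀ s' ∈ S, DSat S Φ s' f φ) → _))
      tauto
  | boxI ψ ih =>
      intro φ S Φ s f
      show ((∀ s' ∈ S, DSat S Φ s' f φ) → ∀ s' ∈ S, _) ↔
        DSat S Φ s f ((DForm.boxI φ).impl (.boxI (relApp φ ψ)))
      rw [impl_iff]
      constructor
      · intro h hI s' hs'
        exact (ih hψ φ S Φ s' f).mp (fun _ => h hI s' hs')
      · intro h hI s' hs'
        exact (ih hψ φ S Φ s' f).mpr (h hI s' hs') hI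
  | boxF ψ ih =>
      intro φ S Φ s f
      show ((∀ s' ∈ S, DSat S Φ s' f φ) → ∀ f' ∈ _, _) ↔
        DSat S Φ s f ((DForm.boxI φ).impl (.boxF ((DForm.boxI φ).impl (relApp φ ψ))))
      rw [impl_iff]
      constructor
      · intro h hI f' hf'
        rw [impl_iff]
        intro hI'
        exact (ih hψ φ S Φ s f').mp (fun _ => h hI f' ⟨hf', hI'⟩)
      · intro h hI f' hf'
        have h1 := h hI f' hf'.1
        rw [impl_iff] at h1
        exact (ih hψ φ S Φ s f').mpr (h1 hf'.2) hf'.2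
  | upd _ _ _ _ => exact absurd hψ (by simp [DForm.static])

/-- The full translation. -/
def tr : DForm Atm Val → DForm Atm Val
  | .atom p => .atom p
  | .dec x => .dec x
  | .neg φ => .neg (tr φ)
  | .and φ ψ => .and (tr φ) (tr ψ)
  | .boxI φ => .boxI (tr φ)
  | .boxF φ => .boxF (tr φ)
  | .upd φ ψ => relApp (tr φ) (tr ψ)

lemma tr_static : ∀ χ : DForm Atm Val, (tr χ).static := by
  intro χ
  induction χ <;> simp_all [tr, DForm.static]
  case upd φ ψ ihφ ihψ => exact relApp_static ihφ _

lemma tr_correct : ∀ (χ : DForm Atm Val) (S : Set (Set Atm))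
    (Φ : Set ((Set Atm) → Val)) s f,
    DSat S Φ s f χ ↔ DSat S Φ s f (tr χ) := by
  intro χ
  induction χ with
  | atom p => intro S Φ s f; exact Iff.rfl
  | dec x => intro S Φ s f; exact Iff.rfl
  | neg φ ih => intro S Φ s f; exact not_congr (ih S Φ s f)
  | and φ ψ ihφ ihψ => intro S Φ s f; exact and_congr (ihφ S Φ s f) (ihψ S Φ s f)
  | boxI φ ih =>
      intro S Φ s f
      exact forall₂_congr (fun s' _ => ih S Φ s' f)
  | boxF φ ih =>
      intro S Φ s f
      exact forall₂_congr (fun f' _ => ih S Φ s f')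
  | upd φ ψ ihφ ihψ =>
      intro S Φ s f
      rw [tr, ← relApp_correct (tr_static ψ)]
      show ((∀ s' ∈ S, DSat S Φ s' f φ) → DSat S _ s f ψ) ↔
        ((∀ s' ∈ S, DSat S Φ s' f (tr φ)) → DSat S _ s f (tr ψ))
      have hset : {f' | f' ∈ Φ ∧ ∀ s' ∈ S, DSat S Φ s' f' φ}
          = {f' | f' ∈ Φ ∧ ∀ s' ∈ S, DSat S Φ s' f' (tr φ)} := by
        ext f'; simp only [Set.mem_setOf_eq]
        constructor
        · rintro ⟨h1, h2⟩; exact ⟨h1, fun s' hs' => (ihφ S Φ s' f').mp (h2 s' hs')⟩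
        · rintro ⟨h1, h2⟩; exact ⟨h1, fun s' hs' => (ihφ S Φ s' f').mpr (h2 s' hs')⟩
      rw [hset]
      constructor
      · intro h hI
        exact (ihψ S _ s f).mp (h (fun s' hs' => (ihφ S Φ s' f).mpr (hI s' hs')))
      · intro h hI
        exact (ihψ S _ s f).mpr (h (fun s' hs' => (ihφ S Φ s' f).mp (hI s' hs')))
end Hidden

/-- every L^dyn formula is semantically equivalent over MCMs to a
static formula of L, via a translation eliminating the dynamic operators. -/
theorem dynamic_reducible_to_static :
    ∃ t : DForm Atm Val → DForm Atm Val,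
      (∀ χ, (t χ).static) ∧
      ∀ (S : Set (Set Atm)) (Φ : Set ((Set Atm) → Val)) (s : Set Atm)
        (f : (Set Atm) → Val), s ∈ S → f ∈ Φ →
        ∀ χ : DForm Atm Val, DSat S Φ s f χ ↔ DSat S Φ s f (t χ) :=
  ⟨Hidden.tr, Hidden.tr_static, fun S Φ s f _ _ χ => Hidden.tr_correct χ S Φ s f⟩
end
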